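/- Let B^w be the m×(m−|S|) matrix (columns indexed by the set of mutable indices k, i.e. those k ∈ [1,m] with s(k) < ∞) with entries (B^w)_{jk} = 1 if j = p(k), −1 if j = s(k), a_{i_j i_k} if j < k < s(j) < s(k), −a_{i_j i_k} if k < j < s(k) < s(j), and 0 otherwise, where (a_{rs}) is a symmetrizable generalized Cartan matrix with symmetrizer (d_r). Then the principal square part of B^w (rows and columns both indexed by mutable indices) is skew-symmetrizable, with symmetrizing constants d_{i_k}. -/

import Mathlib

/-!
Exchanging `j` and `k` permutes the cases of `B^w`: `j = p(k)` holds iff `k = s(j)`, and the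
condition `k < j < s(k) < s(j)` of the fourth case is that of the third case with `j` and `k`
exchanged. So `(B^w)_{jk}` and `(B^w)_{kj}` are either `1` and `-1` (and then `i_j = i_k`), or
`a_{i_j i_k}` and `-a_{i_k i_j}`, or both `0`; in each case `d_r a_{rs} = d_s a_{sr}` gives the
claim.
-/

/-- `s(k)`: the least index `j > k` with `i_j = i_k`, or `∞` if none. -/
noncomputable def sfun {m : ℕ} {I : Type*} [DecidableEq I] (w : Fin m → I) (k : Fin m) : ℕ∞ :=
  WithTop.map Fin.val ((Finset.univ.filter fun j : Fin m => k < j ∧ w j = w k).min)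

/-- `p(k)`: the greatest index `j < k` with `i_j = i_k`, or `−∞` if none. -/
noncomputable def pfun {m : ℕ} {I : Type*} [DecidableEq I] (w : Fin m → I) (k : Fin m) :
    WithBot ℕ :=
  WithBot.map Fin.val ((Finset.univ.filter fun j : Fin m => j < k ∧ w j = w k).max)

open Classical in
/-- The matrix `B^w`, with rows indexed by `[1,m]` and columns indexed by the
mutable indices (`k` with `s(k) < ∞`), where `A` is a generalized Cartan matrix. -/
noncomputable def Bw {m : ℕ} {I : Type*} [DecidableEq I] (A : I → I → ℤ) (w : Fin m → I)
    (j : Fin m) (k : {k : Fin m // sfun w k ≠ ⊤}) : ℤ :=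
  if ((j : ℕ) : WithBot ℕ) = pfun w k.1 then 1
  else if ((j : ℕ) : ℕ∞) = sfun w k.1 then -1
  else if j < k.1 ∧ ((k.1 : ℕ) : ℕ∞) < sfun w j ∧ sfun w j < sfun w k.1 then A (w j) (w k.1)
  else if k.1 < j ∧ ((j : ℕ) : ℕ∞) < sfun w k.1 ∧ sfun w k.1 < sfun w j then -A (w j) (w k.1)
  else 0


theorem Finset.min_eq_coe_iff {α : Type*} [LinearOrder α] {s : Finset α} {a : α} :
    s.min = a ↔ a ∈ s ∧ ∀ b ∈ s, a ≤ b :=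
  ⟨fun h => ⟨mem_of_min h, fun _ hb => min_le_of_eq hb h⟩, fun ⟨ha, hle⟩ =>
    le_antisymm (min_le ha) (Finset.le_min fun b hb => WithTop.coe_le_coe.2 (hle b hb))⟩

theorem Finset.max_eq_coe_iff {α : Type*} [LinearOrder α] {s : Finset α} {a : α} :
    s.max = a ↔ a ∈ s ∧ ∀ b ∈ s, b ≤ a :=
  ⟨fun h => ⟨mem_of_max h, fun _ hb => le_max_of_eq hb h⟩, fun ⟨ha, hle⟩ =>
    le_antisymm (Finset.max_le fun b hb => WithBot.coe_le_coe.2 (hle b hb)) (le_max ha)⟩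

section Word

variable {m : ℕ} {I : Type*} [DecidableEq I] {w : Fin m → I}

theorem sfun_eq_coe_iff {j k : Fin m} :
    sfun w j = (k : ℕ) ↔ j < k ∧ w k = w j ∧ ∀ l, j < l → w l = w j → k ≤ l := by
  change WithTop.map Fin.val _ = WithTop.map Fin.val (k : WithTop (Fin m)) ↔ _
  rw [(WithTop.map_injective Fin.val_injective).eq_iff, Finset.min_eq_coe_iff]
  simp [and_assoc]

theorem pfun_eq_coe_iff {j k : Fin m} :
    pfun w k = (j : ℕ) ↔ j < k ∧ w j = w k ∧ ∀ l, l < k → w l = w k → l ≤ j := by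
  change WithBot.map Fin.val _ = WithBot.map Fin.val (j : WithBot (Fin m)) ↔ _
  rw [(WithBot.map_injective Fin.val_injective).eq_iff, Finset.max_eq_coe_iff]
  simp [and_assoc]

theorem pfun_eq_coe_iff_sfun_eq_coe {j k : Fin m} :
    pfun w k = (j : ℕ) ↔ sfun w j = (k : ℕ) := by
  rw [pfun_eq_coe_iff, sfun_eq_coe_iff]
  refine and_congr_right fun _ => ⟨fun ⟨hw, hmax⟩ => ⟨hw.symm, fun l hjl hl => ?_⟩,
    fun ⟨hw, hmin⟩ => ⟨hw.symm, fun l hlk hl => ?_⟩⟩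
  · exact not_lt.1 fun hlk => (hmax l hlk (hl.trans hw)).not_gt hjl
  · exact not_lt.1 fun hjl => (hmin l hjl (hl.trans hw)).not_gt hlk

theorem lt_of_sfun_eq_coe {j k : Fin m} (h : sfun w j = (k : ℕ)) : j < k :=
  (sfun_eq_coe_iff.1 h).1

theorem lt_of_pfun_eq_coe {j k : Fin m} (h : pfun w k = (j : ℕ)) : j < k :=
  (pfun_eq_coe_iff.1 h).1

def Interlaced (w : Fin m → I) (j k : Fin m) : Prop :=
  j < k ∧ ((k : ℕ) : ℕ∞) < sfun w j ∧ sfun w j < sfun w k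

variable (A : I → I → ℤ)

theorem Bw_eq_one_of_sfun_eq {j : Fin m} {k : {k : Fin m // sfun w k ≠ ⊤}}
    (h : sfun w j = (k.1 : ℕ)) : Bw A w j k = 1 := by
  rw [Bw, if_pos (pfun_eq_coe_iff_sfun_eq_coe.2 h).symm]

theorem Bw_eq_neg_one_of_sfun_eq {j : {k : Fin m // sfun w k ≠ ⊤}} {k : Fin m}
    (h : sfun w j.1 = (k : ℕ)) : Bw A w k j = -1 := by
  have hjk := lt_of_sfun_eq_coe h
  rw [Bw, if_neg fun hp => (lt_of_pfun_eq_coe hp.symm).not_gt hjk, if_pos h.symm]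

theorem Bw_eq_of_interlaced {j : Fin m} {k : {k : Fin m // sfun w k ≠ ⊤}}
    (h : Interlaced w j k.1) : Bw A w j k = A (w j) (w k.1) := by
  obtain ⟨hjk, hks, hss⟩ := h
  rw [Bw, if_neg fun hp => hks.ne (pfun_eq_coe_iff_sfun_eq_coe.1 hp.symm).symm,
    if_neg fun hs => (lt_of_sfun_eq_coe hs.symm).not_gt hjk, if_pos ⟨hjk, hks, hss⟩]

theorem Bw_eq_neg_of_interlaced {j : {k : Fin m // sfun w k ≠ ⊤}} {k : Fin m}
    (h : Interlaced w j.1 k) : Bw A w k j = -A (w k) (w j.1) := by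
  obtain ⟨hjk, hks, hss⟩ := h
  rw [Bw, if_neg fun hp => (lt_of_pfun_eq_coe hp.symm).not_gt hjk, if_neg hks.ne,
    if_neg fun h3 => h3.1.not_gt hjk, if_pos ⟨hjk, hks, hss⟩]

theorem Bw_eq_zero {j : Fin m} {k : {k : Fin m // sfun w k ≠ ⊤}}
    (hjk : sfun w j ≠ (k.1 : ℕ)) (hkj : sfun w k.1 ≠ (j : ℕ))
    (hi : ¬Interlaced w j k.1) (hi' : ¬Interlaced w k.1 j) : Bw A w j k = 0 := by
  unfold Interlaced at hi hi'
  rw [Bw, if_neg fun hp => hjk (pfun_eq_coe_iff_sfun_eq_coe.1 hp.symm), if_neg (Ne.symm hkj),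
    if_neg hi, if_neg hi']

end Word

theorem Bw_principal_skewSymmetrizable_general {m : ℕ} {I : Type*} [DecidableEq I]
    (A : I → I → ℤ) (d : I → ℤ)
    (hsym : ∀ r s, d r * A r s = d s * A s r)
    (w : Fin m → I) :
    ∀ j k : {k : Fin m // sfun w k ≠ ⊤},
      d (w j.1) * Bw A w j.1 k = -(d (w k.1) * Bw A w k.1 j) := by
  intro j k
  by_cases hjk : sfun w j.1 = (k.1 : ℕ)
  · rw [Bw_eq_one_of_sfun_eq A hjk, Bw_eq_neg_one_of_sfun_eq A hjk, (sfun_eq_coe_iff.1 hjk).2.1]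
    ring
  by_cases hkj : sfun w k.1 = (j.1 : ℕ)
  · rw [Bw_eq_one_of_sfun_eq A hkj, Bw_eq_neg_one_of_sfun_eq A hkj, (sfun_eq_coe_iff.1 hkj).2.1]
    ring
  by_cases hi : Interlaced w j.1 k.1
  · rw [Bw_eq_of_interlaced A hi, Bw_eq_neg_of_interlaced A hi, hsym]
    ring
  by_cases hi' : Interlaced w k.1 j.1
  · rw [Bw_eq_of_interlaced A hi', Bw_eq_neg_of_interlaced A hi', hsym]
    ring
  rw [Bw_eq_zero A hjk hkj hi hi', Bw_eq_zero A hkj hjk hi' hi, mul_zero, mul_zero, neg_zero]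

/-- The principal square part of `B^w` (rows and columns both indexed by
mutable indices) is skew-symmetrizable, with symmetrizing constants `d_{i_k}`
coming from a symmetrizer of the generalized Cartan matrix `A`. -/
theorem Bw_principal_skewSymmetrizable {m : ℕ} {I : Type*} [DecidableEq I]
    (A : I → I → ℤ) (d : I → ℤ)
    (hdiag : ∀ r, A r r = 2) (hoff : ∀ r s, r ≠ s → A r s ≤ 0)
    (hdpos : ∀ r, 0 < d r) (hsym : ∀ r s, d r * A r s = d s * A s r)
    (w : Fin m → I) :
    ∀ j k : {k : Fin m // sfun w k ≠ ⊤},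
      d (w j.1) * Bw A w j.1 k = -(d (w k.1) * Bw A w k.1 j) :=
  Bw_principal_skewSymmetrizable_general A d hsym w
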